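/- arXiv:2103.05592 — 2 statements merged into one kernel-verified Lean document; each statement's English description precedes it below -/
import Mathlib

section
/- Over the ring R₂ = F₂ + vF₂ (with v² = v, a Boolean ring of order 4), a 2×2 matrix A is two-sided k-orthogonal (A^T A = A A^T = k·I₂) if and only if A has the form [[a, b], [b, a]] with a + b = k. Consequently |O₂(k, R₂)| = 4 for each k ∈ R₂. -/
open Matrix

set_option maxRecDepth 100000 in
set_option maxHeartbeats 4000000 in
private lemma aux1 : ∀ k : ZMod 2 × ZMod 2,
    (∀ A : Matrix (Fin 2) (Fin 2) (ZMod 2 × ZMod 2),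
      (Aᵀ * A = k • (1 : Matrix (Fin 2) (Fin 2) (ZMod 2 × ZMod 2)) ∧
       A * Aᵀ = k • (1 : Matrix (Fin 2) (Fin 2) (ZMod 2 × ZMod 2))) ↔
      ∃ a b : ZMod 2 × ZMod 2, a + b = k ∧ A = !![a, b; b, a]) := by decide

set_option maxRecDepth 100000 in
set_option maxHeartbeats 4000000 in
private lemma aux2 : ∀ k : ZMod 2 × ZMod 2,
    (Finset.univ.filter (fun A : Matrix (Fin 2) (Fin 2) (ZMod 2 × ZMod 2) =>
      Aᵀ * A = k • (1 : Matrix (Fin 2) (Fin 2) (ZMod 2 × ZMod 2)) ∧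
      A * Aᵀ = k • (1 : Matrix (Fin 2) (Fin 2) (ZMod 2 × ZMod 2)))).card = 4 := by decide

theorem two_sided_orthogonal_over_R2 (k : ZMod 2 × ZMod 2) :
    (∀ A : Matrix (Fin 2) (Fin 2) (ZMod 2 × ZMod 2),
      (Aᵀ * A = k • (1 : Matrix (Fin 2) (Fin 2) (ZMod 2 × ZMod 2)) ∧
       A * Aᵀ = k • (1 : Matrix (Fin 2) (Fin 2) (ZMod 2 × ZMod 2))) ↔
      ∃ a b : ZMod 2 × ZMod 2, a + b = k ∧ A = !![a, b; b, a]) ∧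
    Nat.card {A : Matrix (Fin 2) (Fin 2) (ZMod 2 × ZMod 2) |
      Aᵀ * A = k • (1 : Matrix (Fin 2) (Fin 2) (ZMod 2 × ZMod 2)) ∧
      A * Aᵀ = k • (1 : Matrix (Fin 2) (Fin 2) (ZMod 2 × ZMod 2))} = 4 := by
  refine ⟨aux1 k, ?_⟩
  rw [Nat.card_eq_fintype_card, ← Set.toFinset_card, Set.toFinset_setOf]
  exact aux2 k
end

section
/- If R is a Boolean commutative ring (every element idempotent) and A ∈ M_n(R) satisfies A^T A = k·I_n, then det A = k. -/
open Matrix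

theorem det_eq_k_of_boolean {R : Type*} [CommRing R] {n : ℕ} (hn : 1 ≤ n)
    (hbool : ∀ x : R, x * x = x) (k : R) (A : Matrix (Fin n) (Fin n) R)
    (h : Aᵀ * A = k • (1 : Matrix (Fin n) (Fin n) R)) :
    A.det = k := by
  have hk : ∀ m : ℕ, 1 ≤ m → k ^ m = k := by
    intro m hm
    induction m with
    | zero => omega
    | succ p ih =>
      rcases Nat.eq_zero_or_pos p with hp | hp
      · subst hp; simp
      · rw [pow_succ, ih hp, hbool]
  have := congrArg Matrix.det h
  rw [Matrix.det_mul, Matrix.det_transpose, hbool, Matrix.det_smul,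
    Matrix.det_one, mul_one, Fintype.card_fin, hk n hn] at this
  exact this
end
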